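/- Let n ≥ 2, let A = [[a,b],[c,d]] satisfy c > a > d > 0 > b, let ε ∈ (0,1), and let x ∈ [0,1]ⁿ with payoffs P_i = Σ_{j≠i} u(x_i, x_j) on the complete graph. Then each updated strategy under the complete-graph imitation update satisfies min_j x_j ≤ x_i′ ≤ x_i; in particular the updated strategy vector again lies in [0,1]ⁿ, so the hypercube [0,1]ⁿ is invariant under the dynamics. -/
import Mathlib


/-- The pairwise payoff of a two-strategy game with payoff matrix
`A = [[a,b],[c,d]]`: `u x y = [x, 1-x]ᵀ A [y, 1-y]`. -/
def pdPayoff (a b c d x y : ℝ) : ℝ :=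
  a * x * y + b * x * (1 - y) + c * (1 - x) * y + d * (1 - x) * (1 - y)

/-- The total payoff to player `i` on the complete graph `Kₙ`:
`P_i = Σ_{j ≠ i} u(x_i, x_j)`. -/
noncomputable def completePayoff (n : ℕ) (a b c d : ℝ) (x : Fin n → ℝ) (i : Fin n) : ℝ :=
  ∑ j ∈ Finset.univ.erase i, pdPayoff a b c d (x i) (x j)

/-- One step of the complete-graph imitation update with step size `ε`:
`x_i ↦ x_i + ε·Σ_{j∈J_i} (P_j − P_i)(x_j − x_i) / Σ_{j∈J_i} (P_j − P_i)` where
`J_i = {j : x_j < x_i}`; `x_i` is unchanged when `J_i` is empty. -/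
noncomputable def imitationUpdate (n : ℕ) (a b c d ε : ℝ) (x : Fin n → ℝ) (i : Fin n) : ℝ :=
  if (Finset.univ.filter (fun j => x j < x i)).Nonempty then
    x i + ε * (∑ j ∈ Finset.univ.filter (fun j => x j < x i),
          (completePayoff n a b c d x j - completePayoff n a b c d x i) * (x j - x i)) /
        (∑ j ∈ Finset.univ.filter (fun j => x j < x i),
          (completePayoff n a b c d x j - completePayoff n a b c d x i))
  else x i

lemma payoff_diff_pos (n : ℕ) (a b c d : ℝ) (hca : c > a) (had : a > d) (hd : d > 0)
    (hb : (0 : ℝ) > b) (x : Fin n → ℝ) (hx : ∀ i, x i ∈ Set.Icc (0 : ℝ) 1)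
    (i j : Fin n) (hij : x j < x i) :
    0 < completePayoff n a b c d x j - completePayoff n a b c d x i := by
  have hne : j ≠ i := fun h => absurd hij (by simp [h])
  have hi_mem : i ∈ Finset.univ.erase j := Finset.mem_erase.2 ⟨hne.symm, Finset.mem_univ i⟩
  have hj_mem : j ∈ Finset.univ.erase i := Finset.mem_erase.2 ⟨hne, Finset.mem_univ j⟩
  rw [completePayoff, completePayoff, ← Finset.add_sum_erase _ _ hi_mem,
    ← Finset.add_sum_erase _ _ hj_mem]
  have hs : (Finset.univ.erase j).erase i = (Finset.univ.erase i).erase j :=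
    Finset.erase_right_comm
  rw [hs]
  have h1 : pdPayoff a b c d (x i) (x j) < pdPayoff a b c d (x j) (x i) := by
    unfold pdPayoff
    nlinarith [mul_pos (show (0:ℝ) < c - b by linarith) (sub_pos.2 hij)]
  have h2 : ∀ k ∈ (Finset.univ.erase i).erase j,
      pdPayoff a b c d (x i) (x k) ≤ pdPayoff a b c d (x j) (x k) := by
    intro k _
    have h0 := (hx k).1
    have h1' := (hx k).2
    unfold pdPayoff
    nlinarith [mul_nonneg (sub_nonneg.2 hij.le) h0,
      mul_nonneg (sub_nonneg.2 hij.le) (sub_nonneg.2 h1')]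
  have := Finset.sum_le_sum h2
  linarith

/-- Each updated strategy satisfies `min_j x_j ≤ x_i′ ≤ x_i`; in particular the
updated strategy vector again lies in `[0,1]ⁿ`, so the hypercube `[0,1]ⁿ` is
invariant under the dynamics. -/
theorem imitation_update_sandwich_and_invariance
    (n : ℕ) (hn : 2 ≤ n)
    (a b c d : ℝ) (hca : c > a) (had : a > d) (hd : d > 0) (hb : (0 : ℝ) > b)
    (ε : ℝ) (hε : ε ∈ Set.Ioo (0 : ℝ) 1)
    (x : Fin n → ℝ) (hx : ∀ i, x i ∈ Set.Icc (0 : ℝ) 1) :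
    (∀ i : Fin n,
        Finset.univ.inf' (Finset.univ_nonempty_iff.mpr ⟨⟨0, by omega⟩⟩) x
            ≤ imitationUpdate n a b c d ε x i ∧
        imitationUpdate n a b c d ε x i ≤ x i) ∧
    (∀ i : Fin n, imitationUpdate n a b c d ε x i ∈ Set.Icc (0 : ℝ) 1) := by

  obtain ⟨hε0, hε1⟩ := hε
  set m := Finset.univ.inf' (Finset.univ_nonempty_iff.mpr ⟨(⟨0, by omega⟩ : Fin n)⟩) x with hm
  have hm_le : ∀ j : Fin n, m ≤ x j := fun j => Finset.inf'_le _ (Finset.mem_univ j)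
  have hm0 : 0 ≤ m := Finset.le_inf' _ _ fun j _ => (hx j).1
  have key : ∀ i : Fin n, m ≤ imitationUpdate n a b c d ε x i ∧
      imitationUpdate n a b c d ε x i ≤ x i := by
    intro i
    unfold imitationUpdate
    by_cases h : (Finset.univ.filter (fun j => x j < x i)).Nonempty
    · simp only [h, if_true]
      set S := Finset.univ.filter (fun j => x j < x i) with hS
      have hmemlt : ∀ j ∈ S, x j < x i := fun j hj => (Finset.mem_filter.1 hj).2
      have hden : 0 < ∑ j ∈ S,
          (completePayoff n a b c d x j - completePayoff n a b c d x i) :=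
        Finset.sum_pos (fun j hj =>
          payoff_diff_pos n a b c d hca had hd hb x hx i j (hmemlt j hj)) h
      have hnum_nonpos : (∑ j ∈ S,
          (completePayoff n a b c d x j - completePayoff n a b c d x i) * (x j - x i)) ≤ 0 :=
        Finset.sum_nonpos fun j hj =>
          mul_nonpos_of_nonneg_of_nonpos
            (payoff_diff_pos n a b c d hca had hd hb x hx i j (hmemlt j hj)).le
            (by linarith [hmemlt j hj])
      have hnum_ge : (∑ j ∈ S,
            (completePayoff n a b c d x j - completePayoff n a b c d x i)) * (m - x i) ≤
          ∑ j ∈ S,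
            (completePayoff n a b c d x j - completePayoff n a b c d x i) * (x j - x i) := by
        rw [Finset.sum_mul]
        refine Finset.sum_le_sum fun j hj => ?_
        exact mul_le_mul_of_nonneg_left (by linarith [hm_le j])
          (payoff_diff_pos n a b c d hca had hd hb x hx i j (hmemlt j hj)).le
      set num := ∑ j ∈ S,
        (completePayoff n a b c d x j - completePayoff n a b c d x i) * (x j - x i)
      set den := ∑ j ∈ S,
        (completePayoff n a b c d x j - completePayoff n a b c d x i)
      have hdiv_le : ε * num / den ≤ 0 :=
        div_nonpos_of_nonpos_of_nonneg (mul_nonpos_of_nonneg_of_nonpos hε0.le hnum_nonpos)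
          hden.le
      have hq : m - x i ≤ num / den := (le_div_iff₀ hden).2 (by linarith [hnum_ge])
      have hdiv_ge : m - x i ≤ ε * num / den := by
        have h1 : ε * (m - x i) ≤ ε * (num / den) :=
          mul_le_mul_of_nonneg_left hq hε0.le
        have h2 : m - x i ≤ ε * (m - x i) := by nlinarith [hm_le i]
        calc m - x i ≤ ε * (m - x i) := h2
          _ ≤ ε * (num / den) := h1
          _ = ε * num / den := (mul_div_assoc _ _ _).symm
      constructor
      · linarith
      · linarith
    · simp only [h, if_false]
      exact ⟨hm_le i, le_refl _⟩
  refine ⟨key, fun i => ⟨le_trans hm0 (key i).1, le_trans (key i).2 (hx i).2⟩⟩
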